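/- A type B partition d_B ∈ P_1(2n+1) is special (i.e., its transpose is again of type B) if and only if its unique block decomposition into types B1, B1*, B2, B3 contains no block of type B1*. -/

import Mathlib

/-!
For a weakly decreasing `d = (d₀ ≥ d₁ ≥ ⋯)`, padded with zeros, the part `v + 1` occurs
`d_v - d_{v+1}` times in the transpose. Hence the transpose is of type B exactly when
`d_{2k+1} + d_{2k+2}` is even for every `k`, i.e. when the tail of `d` splits into consecutive
pairs with even sums (`PairSumsEven`).

A B1 or B2 block starts and ends with an odd part and has equal pairs of even parts in
between, and a B3 block is an odd part followed by such pairs; so in a concatenation of B1/B2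
blocks closed by a B3 block the last part of each block pairs with the first part of the next,
and the tail is `PairSumsEven`. Conversely, for a type B partition with such a tail the blocks are
read off greedily: the head `a` is odd (the total is odd), the even parts after it come in equal
pairs (even parts have even multiplicity), and the next odd part `a₂` closes a B1 or B2 block;
its partner in the tail is odd and heads the next block. If no odd part follows, the B3 block
`[a, b₁², …, b_k²]` ends the decomposition.
-/

/-- `[b₁, b₁, b₂, b₂, ...]`: each entry of `bs` doubled. -/
def pairList (bs : List ℕ) : List ℕ := bs.flatMap fun b => [b, b]

/-- Type B1 block: `[a, a]` with `a` odd. -/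
def IsB1 (T : List ℕ) : Prop := ∃ a, Odd a ∧ T = [a, a]

/-- Type B1* block: `[b, b]` with `b` even (and positive). -/
def IsB1s (T : List ℕ) : Prop := ∃ b, 0 < b ∧ Even b ∧ T = [b, b]

/-- Type B2 block: `[a₁, b₁², ..., b_k², a₂]` with `a₁, a₂` odd, all `b_j` even,
`a₁ > b₁ ≥ ... ≥ b_k > a₂` and `k ≥ 0`. -/
def IsB2 (T : List ℕ) : Prop :=
  ∃ a₁ a₂ bs, Odd a₁ ∧ Odd a₂ ∧ a₂ < a₁ ∧
    (∀ b ∈ bs, Even b ∧ a₂ < b ∧ b < a₁) ∧ List.Pairwise (· ≥ ·) bs ∧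
    T = a₁ :: (pairList bs ++ [a₂])

/-- Type B3 block: `[a, b₁², ..., b_k²]` with `a` odd, all `b_j` even (positive),
`a > b₁ ≥ ... ≥ b_k`, `k ≥ 0`. -/
def IsB3 (T : List ℕ) : Prop :=
  ∃ a bs, Odd a ∧ (∀ b ∈ bs, 0 < b ∧ Even b ∧ b < a) ∧ List.Pairwise (· ≥ ·) bs ∧
    T = a :: pairList bs

/-- A type B partition of `N`, as a weakly decreasing list of positive integers summing
to `N` in which every even part occurs with even multiplicity. -/
def IsTypeBList (d : List ℕ) (N : ℕ) : Prop :=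
  List.Pairwise (· ≥ ·) d ∧ (∀ x ∈ d, 0 < x) ∧ d.sum = N ∧
    ∀ i, Even i → Even (d.count i)

/-- `Ts` is a decomposition of `d` into consecutive blocks of types B1, B1*, B2, B3. -/
def IsBlockDecomp (d : List ℕ) (Ts : List (List ℕ)) : Prop :=
  d = Ts.flatten ∧ ∀ T ∈ Ts, IsB1 T ∨ IsB1s T ∨ IsB2 T ∨ IsB3 T

/-- The block of type B3 appears exactly once, and at the end. -/
def B3AtEnd (Ts : List (List ℕ)) : Prop :=
  ∃ Ts' T, Ts = Ts' ++ [T] ∧ IsB3 T ∧ ∀ T' ∈ Ts', ¬ IsB3 T'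

/-- The transpose (dual) partition of a list partition:
entry `i` (0-indexed) is `#{x ∈ d : x ≥ i + 1}`. -/
def transposeL (d : List ℕ) : List ℕ :=
  (List.range d.headI).map fun i => d.countP fun x => decide (i + 1 ≤ x)

theorem ne_of_odd_of_even {a x : ℕ} (ha : Odd a) (hx : Even x) : a ≠ x := by
  rintro rfl
  exact Nat.not_even_iff_odd.mpr ha hx

theorem lt_of_le_of_even_of_odd {m n : ℕ} (h : m ≤ n) (hm : Even m) (hn : Odd n) : m < n :=
  h.lt_of_ne (ne_of_odd_of_even hn hm).symm

theorem lt_of_le_of_odd_of_even {m n : ℕ} (h : m ≤ n) (hm : Odd m) (hn : Even n) : m < n :=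
  h.lt_of_ne (ne_of_odd_of_even hm hn)

theorem pairList_cons (b : ℕ) (bs : List ℕ) : pairList (b :: bs) = b :: b :: pairList bs := rfl

theorem mem_pairList {b : ℕ} {bs : List ℕ} : b ∈ pairList bs ↔ b ∈ bs := by
  simp [pairList]

theorem length_pairList (bs : List ℕ) : (pairList bs).length = 2 * bs.length := by
  induction bs with
  | nil => rfl
  | cons b bs ih => simp only [pairList_cons, List.length_cons, ih]; ring

theorem count_pairList (x : ℕ) (bs : List ℕ) : (pairList bs).count x = 2 * bs.count x := by
  induction bs with
  | nil => rfl
  | cons b bs ih => simp only [pairList_cons, List.count_cons, ih]; ring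

inductive PairSumsEven : List ℕ → Prop
  | nil : PairSumsEven []
  | singleton {x : ℕ} : Even x → PairSumsEven [x]
  | cons_cons {x y : ℕ} {t : List ℕ} : Even (x + y) → PairSumsEven t → PairSumsEven (x :: y :: t)

namespace PairSumsEven

theorem even_sum {l : List ℕ} (h : PairSumsEven l) : Even l.sum := by
  induction h with
  | nil => exact Even.zero
  | singleton hx => simpa using hx
  | cons_cons hxy _ ih => simpa [← add_assoc] using hxy.add ih

theorem pairList_append {l : List ℕ} (h : PairSumsEven l) (bs : List ℕ) :
    PairSumsEven (pairList bs ++ l) := by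
  induction bs with
  | nil => exact h
  | cons b bs ih => exact .cons_cons (by simp) ih

theorem of_pairList_append {bs l : List ℕ} (h : PairSumsEven (pairList bs ++ l)) :
    PairSumsEven l := by
  induction bs with
  | nil => exact h
  | cons b bs ih =>
    cases h with
    | cons_cons _ h => exact ih h

theorem iff_getD {l : List ℕ} :
    PairSumsEven l ↔ ∀ k, Even (l.getD (2 * k) 0 + l.getD (2 * k + 1) 0) := by
  refine ⟨fun h => ?_, fun h => ?_⟩
  · induction h with
    | nil => simp
    | singleton hx => rintro (_ | k) <;> simp [hx, Nat.mul_succ]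
    | cons_cons hxy _ ih =>
      rintro (_ | k)
      · simpa using hxy
      · simpa [Nat.mul_succ] using ih k
  · induction l using List.twoStepInduction with
    | nil => exact .nil
    | singleton x => exact .singleton (by simpa using h 0)
    | cons_cons x y t ih _ =>
      exact .cons_cons (by simpa using h 0) (ih fun k => by simpa [Nat.mul_succ] using h (k + 1))

end PairSumsEven

section Transpose

variable {d : List ℕ}

theorem getD_le_of_forall_le {r : List ℕ} {x : ℕ} (h : ∀ y ∈ r, y ≤ x) (w : ℕ) :
    r.getD w 0 ≤ x := by
  rw [List.getD_eq_getElem?_getD]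
  cases hw : r[w]? with
  | none => simp
  | some y => exact h y (List.mem_of_getElem? hw)

theorem getD_antitone (hs : d.Pairwise (· ≥ ·)) : Antitone fun v => d.getD v 0 := by
  induction d with
  | nil => intro v w _; simp
  | cons x r ih =>
    obtain ⟨hx, hr⟩ := List.pairwise_cons.mp hs
    rintro (_ | v) (_ | w) hvw
    · rfl
    · exact getD_le_of_forall_le hx w
    · omega
    · exact ih hr (Nat.succ_le_succ_iff.mp hvw)

theorem succ_le_countP_le_iff (hs : d.Pairwise (· ≥ ·)) {t : ℕ} (ht : 0 < t) (v : ℕ) :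
    v + 1 ≤ d.countP (fun x => decide (t ≤ x)) ↔ t ≤ d.getD v 0 := by
  induction d generalizing v with
  | nil => simp; omega
  | cons x r ih =>
    obtain ⟨hx, hr⟩ := List.pairwise_cons.mp hs
    by_cases htx : t ≤ x
    · rcases v with _ | v
      · simp [htx]
      · rw [List.getD_cons_succ, ← ih hr v, List.countP_cons]
        simp [htx]
    · have hr0 : r.countP (fun y => decide (t ≤ y)) = 0 :=
        List.countP_eq_zero.mpr fun y hy => by simpa using (hx y hy).trans_lt (not_le.mp htx)
      have hv : (x :: r).getD v 0 < t :=
        ((getD_antitone hs (Nat.zero_le v)).trans_eq rfl).trans_lt (not_le.mp htx)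
      rw [List.countP_cons, hr0]
      simpa [htx] using hv.not_ge

theorem countP_range_mem_Ico (lo hi n : ℕ) :
    (List.range n).countP (fun i => decide (lo ≤ i ∧ i < hi)) = min hi n - min lo n := by
  induction n with
  | zero => simp
  | succ n ih =>
    rw [List.range_succ, List.countP_append, ih]
    by_cases h : lo ≤ n ∧ n < hi <;> simp [h] <;> omega

theorem transposeL_count_succ (hs : d.Pairwise (· ≥ ·)) (v : ℕ) :
    (transposeL d).count (v + 1) = d.getD v 0 - d.getD (v + 1) 0 := by
  have hmem (i : ℕ) : d.countP (fun x => decide (i + 1 ≤ x)) = v + 1 ↔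
      d.getD (v + 1) 0 ≤ i ∧ i < d.getD v 0 := by
    have h₁ := succ_le_countP_le_iff hs (t := i + 1) (by omega) v
    have h₂ := succ_le_countP_le_iff hs (t := i + 1) (by omega) (v + 1)
    omega
  rw [transposeL, List.count, List.countP_map]
  rw [List.countP_congr (q := fun i => decide (d.getD (v + 1) 0 ≤ i ∧ i < d.getD v 0))
    (fun i _ => by simpa using hmem i), countP_range_mem_Ico]
  have h₀ : d.getD v 0 ≤ d.getD 0 0 := getD_antitone hs (Nat.zero_le v)
  have h₁ : d.getD (v + 1) 0 ≤ d.getD v 0 := getD_antitone hs (Nat.le_succ v)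
  have hhead : d.getD 0 0 = d.headI := by cases d <;> rfl
  omega

theorem transposeL_pairwise (d : List ℕ) : (transposeL d).Pairwise (· ≥ ·) :=
  List.pairwise_le_range.map _ fun _ _ hij =>
    List.countP_mono_left fun _ _ h => by simp only [decide_eq_true_eq] at h ⊢; omega

theorem transposeL_pos (d : List ℕ) : ∀ x ∈ transposeL d, 0 < x := by
  intro x hx
  obtain ⟨i, hi, rfl⟩ := List.mem_map.mp hx
  cases d with
  | nil => simp at hi
  | cons a t => exact List.countP_pos_iff.mpr ⟨a, by simp, by simpa using hi⟩

theorem sum_map_range_ite_eq_min (x h : ℕ) :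
    ((List.range h).map fun i => if i + 1 ≤ x then 1 else 0).sum = min x h := by
  induction h with
  | zero => simp
  | succ h ih =>
    rw [List.sum_range_succ, ih]
    split_ifs <;> omega

theorem sum_map_range_countP_eq_sum {h : ℕ} {r : List ℕ} (hr : ∀ x ∈ r, x ≤ h) :
    ((List.range h).map fun i => r.countP fun x => decide (i + 1 ≤ x)).sum = r.sum := by
  induction r with
  | nil => simp
  | cons x r ih =>
    simp only [List.countP_cons, decide_eq_true_eq, List.sum_map_add, List.sum_cons]
    rw [ih fun y hy => hr y (.tail x hy), sum_map_range_ite_eq_min,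
      min_eq_left (hr x List.mem_cons_self), add_comm]

theorem transposeL_sum (hs : d.Pairwise (· ≥ ·)) : (transposeL d).sum = d.sum :=
  sum_map_range_countP_eq_sum fun x hx => by
    cases d with
    | nil => simp at hx
    | cons a t => exact (List.mem_cons.mp hx).elim (·.le) ((List.pairwise_cons.mp hs).1 x)

theorem isTypeBList_transposeL_iff (hs : d.Pairwise (· ≥ ·)) :
    IsTypeBList (transposeL d) d.sum ↔ PairSumsEven d.tail := by
  have hcount (k : ℕ) : Even ((transposeL d).count (2 * k + 2)) ↔
      Even (d.tail.getD (2 * k) 0 + d.tail.getD (2 * k + 1) 0) := by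
    rw [transposeL_count_succ hs, Nat.even_sub (getD_antitone hs (Nat.le_succ _)), Nat.even_add]
    cases d <;> rfl
  have hzero : (transposeL d).count 0 = 0 :=
    List.count_eq_zero.mpr fun h => (transposeL_pos d 0 h).false
  rw [IsTypeBList, and_iff_right (transposeL_pairwise d), and_iff_right (transposeL_pos d),
    and_iff_right (transposeL_sum hs), PairSumsEven.iff_getD]
  constructor
  · exact fun h k => (hcount k).mp (h _ ⟨k + 1, by ring⟩)
  · rintro h _ ⟨_ | k, rfl⟩
    · simp [hzero]
    · simpa [← two_mul, mul_add] using (hcount k).mpr (h k)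

end Transpose

section Blocks

variable {T : List ℕ}

theorem IsB1.length_eq (h : IsB1 T) : T.length = 2 := by
  obtain ⟨a, -, rfl⟩ := h; rfl

theorem IsB1s.length_eq (h : IsB1s T) : T.length = 2 := by
  obtain ⟨b, -, -, rfl⟩ := h; rfl

theorem IsB2.even_length (h : IsB2 T) : Even T.length := by
  obtain ⟨a₁, a₂, bs, -, -, -, -, -, rfl⟩ := h
  exact ⟨bs.length + 1, by simp [length_pairList]; ring⟩

theorem IsB3.odd_length (h : IsB3 T) : Odd T.length := by
  obtain ⟨a, bs, -, -, -, rfl⟩ := h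
  simp [length_pairList]

theorem IsB1.not_isB1s (h : IsB1 T) : ¬ IsB1s T := by
  obtain ⟨a, ha, rfl⟩ := h
  rintro ⟨b, -, hb, heq⟩
  obtain rfl : a = b := (List.cons_eq_cons.mp heq).1
  exact Nat.not_even_iff_odd.mpr ha hb

theorem IsB2.not_isB1s (h : IsB2 T) : ¬ IsB1s T := by
  obtain ⟨a₁, a₂, bs, -, -, hlt, -, -, rfl⟩ := h
  rintro ⟨b, -, -, heq⟩
  have hbs : bs = [] := by simpa [length_pairList] using congrArg List.length heq
  subst hbs
  simp only [pairList, List.flatMap_nil, List.nil_append, List.cons.injEq, and_true] at heq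
  omega

theorem IsB3.not_isB1s (h : IsB3 T) : ¬ IsB1s T := fun h' =>
  Nat.not_odd_iff_even.mpr even_two (h'.length_eq ▸ h.odd_length)

theorem IsB1.not_isB3 (h : IsB1 T) : ¬ IsB3 T := fun h' =>
  Nat.not_odd_iff_even.mpr even_two (h.length_eq ▸ h'.odd_length)

theorem IsB2.not_isB3 (h : IsB2 T) : ¬ IsB3 T := fun h' =>
  Nat.not_even_iff_odd.mpr h'.odd_length h.even_length

theorem isB3_cons_pairList {a : ℕ} {bs : List ℕ} (ha : Odd a) (hbs : bs.Pairwise (· ≥ ·))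
    (hb : ∀ b ∈ bs, 0 < b ∧ Even b ∧ b ≤ a) : IsB3 (a :: pairList bs) :=
  ⟨a, bs, ha, fun b hb' => ⟨(hb b hb').1, (hb b hb').2.1,
    lt_of_le_of_even_of_odd (hb b hb').2.2 (hb b hb').2.1 ha⟩, hbs, rfl⟩

theorem isB1_or_isB2_cons_pairList_append {a₁ a₂ : ℕ} {bs : List ℕ} (h₁ : Odd a₁) (h₂ : Odd a₂)
    (h : a₂ ≤ a₁) (hbs : bs.Pairwise (· ≥ ·)) (hb : ∀ b ∈ bs, Even b ∧ a₂ ≤ b ∧ b ≤ a₁) :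
    IsB1 (a₁ :: (pairList bs ++ [a₂])) ∨ IsB2 (a₁ :: (pairList bs ++ [a₂])) := by
  rcases h.eq_or_lt with rfl | hlt
  · obtain rfl : bs = [] := List.eq_nil_iff_forall_not_mem.mpr fun b hb' => by
      obtain ⟨hbe, hle, hge⟩ := hb b hb'
      exact ne_of_odd_of_even h₂ hbe (le_antisymm hle hge)
    exact .inl ⟨a₂, h₂, rfl⟩
  · exact .inr ⟨a₁, a₂, bs, h₁, h₂, hlt, fun b hb' => ⟨(hb b hb').1,
      lt_of_le_of_odd_of_even (hb b hb').2.1 h₂ (hb b hb').1,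
      lt_of_le_of_even_of_odd (hb b hb').2.2 (hb b hb').1 h₁⟩, hbs, rfl⟩

end Blocks

def IsSpecialBlockDecomp (d : List ℕ) (Ts : List (List ℕ)) : Prop :=
  d = Ts.flatten ∧ ∃ Ts' T, Ts = Ts' ++ [T] ∧ (∀ T' ∈ Ts', IsB1 T' ∨ IsB2 T') ∧ IsB3 T

namespace IsSpecialBlockDecomp

theorem singleton {T : List ℕ} (h : IsB3 T) : IsSpecialBlockDecomp T [T] :=
  ⟨by simp, [], T, rfl, by simp, h⟩

theorem cons {d B : List ℕ} {Ts : List (List ℕ)} (hB : IsB1 B ∨ IsB2 B)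
    (h : IsSpecialBlockDecomp d Ts) : IsSpecialBlockDecomp (B ++ d) (B :: Ts) := by
  obtain ⟨rfl, Ts', T, rfl, h12, hT⟩ := h
  refine ⟨by simp, B :: Ts', T, rfl, ?_, hT⟩
  simpa using ⟨hB, h12⟩

theorem exists_eq_cons {d : List ℕ} {Ts : List (List ℕ)} (h : IsSpecialBlockDecomp d Ts) :
    ∃ a t, d = a :: t ∧ Odd a ∧ PairSumsEven t := by
  obtain ⟨rfl, Ts', T, rfl, h12, hT⟩ := h
  induction Ts' with
  | nil =>
    obtain ⟨a, bs, ha, -, -, rfl⟩ := hT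
    exact ⟨a, pairList bs, by simp, ha, by simpa using PairSumsEven.nil.pairList_append bs⟩
  | cons B Ts' ih =>
    obtain ⟨a', t, ht, ha', hpe⟩ := ih fun T' hT' => h12 T' (.tail B hT')
    rw [List.cons_append, List.flatten_cons, ht]
    rcases h12 B List.mem_cons_self with ⟨a, ha, rfl⟩ | ⟨a₁, a₂, bs, h₁, h₂, -, -, -, rfl⟩
    · exact ⟨a, a :: a' :: t, rfl, ha, .cons_cons (ha.add_odd ha') hpe⟩
    · exact ⟨a₁, pairList bs ++ a₂ :: a' :: t, by simp, h₁,
        (PairSumsEven.cons_cons (h₂.add_odd ha') hpe).pairList_append bs⟩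

end IsSpecialBlockDecomp

theorem isBlockDecomp_and_b3AtEnd_iff {d : List ℕ} {Ts : List (List ℕ)} :
    (IsBlockDecomp d Ts ∧ B3AtEnd Ts) ∧ (∀ T ∈ Ts, ¬ IsB1s T) ↔ IsSpecialBlockDecomp d Ts := by
  constructor
  · rintro ⟨⟨⟨rfl, hblocks⟩, Ts', T, rfl, hT, hnot3⟩, hnot1s⟩
    refine ⟨rfl, Ts', T, rfl, fun T' hT' => ?_, hT⟩
    have hmem : T' ∈ Ts' ++ [T] := List.mem_append_left _ hT'
    rcases hblocks T' hmem with h | h | h | h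
    exacts [.inl h, (hnot1s T' hmem h).elim, .inr h, (hnot3 T' hT' h).elim]
  · rintro ⟨rfl, Ts', T, rfl, h12, hT⟩
    have hblock : ∀ T' ∈ Ts' ++ [T], IsB1 T' ∨ IsB2 T' ∨ IsB3 T' := by
      simp only [List.mem_append, List.mem_singleton]
      rintro T' (hT' | rfl)
      exacts [(h12 T' hT').imp_right .inl, .inr (.inr hT)]
    refine ⟨⟨⟨rfl, fun T' hT' => ?_⟩, Ts', T, rfl, hT, fun T' hT' => ?_⟩, fun T' hT' => ?_⟩
    · rcases hblock T' hT' with h | h | h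
      exacts [.inl h, .inr (.inr (.inl h)), .inr (.inr (.inr h))]
    · exact (h12 T' hT').elim IsB1.not_isB3 IsB2.not_isB3
    · rcases hblock T' hT' with h | h | h
      exacts [h.not_isB1s, h.not_isB1s, h.not_isB1s]

theorem exists_eq_pairList_append : ∀ {t : List ℕ}, t.Pairwise (· ≥ ·) →
    (∀ x, Even x → Even (t.count x)) →
    ∃ bs r, t = pairList bs ++ r ∧ bs.Pairwise (· ≥ ·) ∧ (∀ b ∈ bs, Even b) ∧ ∀ x ∈ r.head?, Odd x
  | [], _, _ => ⟨[], [], rfl, .nil, by simp, by simp⟩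
  | x :: r, hs, hc => by
    by_cases hx : Odd x
    · exact ⟨[], x :: r, rfl, .nil, by simp, by simpa⟩
    replace hx : Even x := Nat.not_odd_iff_even.mp hx
    have hxr : x ∈ r := by
      have hcx := hc x hx
      rw [List.count_cons_self, Nat.even_add_one] at hcx
      exact List.count_pos_iff.mp (Nat.pos_of_ne_zero fun h0 => hcx (h0 ▸ Even.zero))
    obtain ⟨r, rfl⟩ : ∃ r', r = x :: r' := by
      rcases r with _ | ⟨y, r⟩
      · simp at hxr
      · have hyx : y ≤ x := (List.pairwise_cons.mp hs).1 y List.mem_cons_self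
        have hxy : x ≤ y := (List.mem_cons.mp hxr).elim (·.le) ((List.pairwise_cons.mp hs.tail).1 x)
        exact ⟨r, by rw [le_antisymm hyx hxy]⟩
    have hcr (z : ℕ) (hz : Even z) : Even (r.count z) := by
      have hcz := hc z hz
      rw [List.count_cons, List.count_cons] at hcz
      split_ifs at hcz <;> simpa [Nat.even_add_one] using hcz
    obtain ⟨bs, r', rfl, hbs, hbe, hr'⟩ := exists_eq_pairList_append hs.tail.tail hcr
    refine ⟨x :: bs, r', rfl, List.pairwise_cons.mpr ⟨fun b hb => ?_, hbs⟩, ?_, hr'⟩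
    · exact (List.pairwise_cons.mp hs).1 b (by simp [mem_pairList, hb])
    · simpa [hx] using hbe

theorem exists_isSpecialBlockDecomp_cons {a : ℕ} {t : List ℕ} (ha : Odd a)
    (hs : (a :: t).Pairwise (· ≥ ·)) (hpos : ∀ x ∈ t, 0 < x) (hc : ∀ x, Even x → Even (t.count x))
    (hpe : PairSumsEven t) : ∃ Ts, IsSpecialBlockDecomp (a :: t) Ts := by
  induction hlen : t.length using Nat.strong_induction_on generalizing a t with | _ _ ih =>
  obtain ⟨bs, r, rfl, hbs, hbe, hr⟩ := exists_eq_pairList_append hs.tail hc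
  have hle : ∀ x ∈ pairList bs ++ r, x ≤ a := (List.pairwise_cons.mp hs).1
  rcases r with _ | ⟨a₂, r⟩
  · have hB3 : IsB3 (a :: pairList bs) := isB3_cons_pairList ha hbs fun b hb => by
      have hb' : b ∈ pairList bs ++ [] := by simp [mem_pairList, hb]
      exact ⟨hpos b hb', hbe b hb, hle b hb'⟩
    exact ⟨_, by simpa using IsSpecialBlockDecomp.singleton hB3⟩
  have h₂ : Odd a₂ := hr a₂ rfl
  obtain ⟨-, hsr, hbr⟩ := List.pairwise_append.mp hs.tail
  cases hpe.of_pairList_append with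
  | singleton h => exact absurd h (Nat.not_even_iff_odd.mpr h₂)
  | @cons_cons _ y r hsum hpe' =>
    have hy : Odd y := (Nat.even_add'.mp hsum).mp h₂
    have hcr (z : ℕ) (hz : Even z) : Even (r.count z) := by
      have hcz := hc z hz
      rwa [List.count_append, count_pairList, List.count_cons_of_ne (ne_of_odd_of_even h₂ hz),
        List.count_cons_of_ne (ne_of_odd_of_even hy hz), Nat.even_add,
        iff_true_intro (even_two_mul _), true_iff] at hcz
    obtain ⟨Ts, hTs⟩ := ih r.length (by simp [← hlen, length_pairList]; omega) hy hsr.tail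
      (fun x hx => hpos x (by simp [hx])) hcr hpe' rfl
    have hB := isB1_or_isB2_cons_pairList_append ha h₂ (hle a₂ (by simp)) hbs fun b hb =>
      ⟨hbe b hb, hbr b (mem_pairList.mpr hb) a₂ List.mem_cons_self,
        hle b (by simp [mem_pairList, hb])⟩
    exact ⟨_, by simpa using hTs.cons hB⟩

/-- a type B partition `d` of `2n+1` is special (its transpose is again a
type B partition) if and only if its (unique) block decomposition contains no block of
type B1*. -/
theorem stmt9 (n : ℕ) (d : List ℕ) (hd : IsTypeBList d (2 * n + 1)) :
    IsTypeBList (transposeL d) (2 * n + 1) ↔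
      ∃ Ts : List (List ℕ), (IsBlockDecomp d Ts ∧ B3AtEnd Ts) ∧
        ∀ T ∈ Ts, ¬ IsB1s T := by
  obtain ⟨hs, hpos, hsum, hc⟩ := hd
  simp only [← hsum, isTypeBList_transposeL_iff hs, isBlockDecomp_and_b3AtEnd_iff]
  constructor
  · intro hpe
    rcases d with _ | ⟨a, t⟩
    · simp at hsum
    have hodd : Odd (a + t.sum) := by rw [← List.sum_cons, hsum]; exact odd_two_mul_add_one n
    have ha : Odd a := (Nat.odd_add.mp hodd).mpr hpe.even_sum
    refine exists_isSpecialBlockDecomp_cons ha hs (fun x hx => hpos x (.tail a hx))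
      (fun x hx => ?_) hpe
    simpa [List.count_cons_of_ne (ne_of_odd_of_even ha hx)] using hc x hx
  · rintro ⟨Ts, hTs⟩
    obtain ⟨a, t, rfl, -, hpe⟩ := hTs.exists_eq_cons
    exact hpe
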